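/- For s ∈ [0, √2], one has f(s) = 0 if and only if s ∈ {0, √2} ∪ {β^k : k ∈ ℕ, k ≥ 1} ∪ {√2 − β^k : k ∈ ℕ, k ≥ 1}. -/

import Mathlib

noncomputable section

/-- `β = √2 - 1`. -/
def β : ℝ := Real.sqrt 2 - 1

/-- `ω = √2 + 1`. -/
def ω : ℝ := Real.sqrt 2 + 1

/-- The break points `Δ_i`. -/
def Δ (i : ℤ) : ℝ :=
  if i < 0 then β ^ i.natAbs
  else if i = 0 then β
  else Real.sqrt 2 - β ^ i.natAbs

/-- The intervals `I_i`. -/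
def Iint (i : ℤ) : Set ℝ :=
  if i < 0 then Set.Ioc (Δ (i - 1)) (Δ i)
  else if i = 0 then Set.Ioo β 1
  else Set.Ico (Δ i) (Δ (i + 1))

/-- The defining formula of `f` on the interval `I_i`. -/
def fval (i : ℤ) (s : ℝ) : ℝ :=
  if i < 0 then ω ^ (i.natAbs + 1) * (Δ i - s)
  else if i = 0 then ω * (s - β)
  else ω ^ (i.natAbs + 1) * (s - Δ i)

/-- `f` is the renormalization map: `f 0 = f √2 = 0` and on each interval `I_i`
    it is given by the corresponding affine formula. These conditions determine
    `f` uniquely on `[0, √2]`. -/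
def IsLuroth (f : ℝ → ℝ) : Prop :=
  f 0 = 0 ∧ f (Real.sqrt 2) = 0 ∧ ∀ i : ℤ, ∀ s ∈ Iint i, f s = fval i s

/-- `ℚ(√2)` as a subset of `ℝ`. -/
def QSqrt2 : Set ℝ := {x | ∃ a b : ℚ, x = (a : ℝ) + (b : ℝ) * Real.sqrt 2}

/-- `ℤ[√2]` as a subset of `ℝ`. -/
def ZSqrt2 : Set ℝ := {x | ∃ m n : ℤ, x = (m : ℝ) + (n : ℝ) * Real.sqrt 2}

/-- `M_d = {s ∈ [0,√2] : d·s ∈ ℤ[√2]}`. -/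
def Mset (d : ℤ) : Set ℝ :=
  {s | s ∈ Set.Icc 0 (Real.sqrt 2) ∧ (d : ℝ) * s ∈ ZSqrt2}

/-! On each `I_i` the map `f` is affine with nonzero slope and vanishes only at `Δ_i`, which lies
in `I_i` exactly when `i ≠ 0`. Since the `I_i` cover `(0, √2)` (the powers `β^n` decrease to `0`),
the zeros of `f` in the open interval are the `Δ_i` with `i ≠ 0`. -/

lemma β_pos : 0 < β := by
  unfold β; linarith [Real.one_lt_sqrt_two]

lemma β_lt_one : β < 1 := by
  have : √2 < 2 := by rw [Real.sqrt_lt' two_pos]; norm_num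
  unfold β; linarith

lemma ω_pos : 0 < ω := by
  unfold ω; positivity

lemma Δ_zero : Δ 0 = β := by
  simp [Δ]

lemma Δ_neg_natCast {n : ℕ} (hn : n ≠ 0) : Δ (-n) = β ^ n := by
  simp [Δ, Nat.pos_of_ne_zero hn]

lemma Δ_natCast {n : ℕ} (hn : n ≠ 0) : Δ n = √2 - β ^ n := by
  simp [Δ, hn]

lemma mem_Iint_neg_natCast_iff {n : ℕ} (hn : n ≠ 0) {s : ℝ} :
    s ∈ Iint (-n) ↔ β ^ (n + 1) < s ∧ s ≤ β ^ n := by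
  have hlt : (-n : ℤ) < 0 := by omega
  have hsub : (-n : ℤ) - 1 = -↑(n + 1) := by push_cast; ring
  rw [Iint, if_pos hlt, hsub, Δ_neg_natCast hn, Δ_neg_natCast n.add_one_ne_zero, Set.mem_Ioc]

lemma mem_Iint_natCast_iff {n : ℕ} (hn : n ≠ 0) {s : ℝ} :
    s ∈ Iint n ↔ √2 - s ∈ Iint (-n) := by
  have hn' : ¬ (n : ℤ) < 0 := by omega
  have hadd : (n : ℤ) + 1 = ↑(n + 1) := by push_cast; ring
  rw [mem_Iint_neg_natCast_iff hn, Iint, if_neg hn', if_neg (by exact_mod_cast hn), hadd,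
    Δ_natCast hn, Δ_natCast n.add_one_ne_zero, Set.mem_Ico]
  constructor <;> rintro ⟨h₁, h₂⟩ <;> constructor <;> linarith

lemma Δ_mem_Iint {i : ℤ} (hi : i ≠ 0) : Δ i ∈ Iint i := by
  have hβ : β ^ (i.natAbs + 1) < β ^ i.natAbs :=
    pow_lt_pow_right_of_lt_one₀ β_pos β_lt_one (Nat.lt_succ_self _)
  have hn : i.natAbs ≠ 0 := Int.natAbs_ne_zero.mpr hi
  rcases Int.natAbs_eq i with h | h <;> rw [h]
  · rw [mem_Iint_natCast_iff hn, Δ_natCast hn, sub_sub_cancel, mem_Iint_neg_natCast_iff hn]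
    exact ⟨hβ, le_rfl⟩
  · rw [Δ_neg_natCast hn, mem_Iint_neg_natCast_iff hn]
    exact ⟨hβ, le_rfl⟩

lemma fval_eq_zero_iff {i : ℤ} {s : ℝ} : fval i s = 0 ↔ s = Δ i := by
  have hω : ∀ n : ℕ, ω ^ n ≠ 0 := fun n => pow_ne_zero n ω_pos.ne'
  unfold fval Δ
  split_ifs <;> simp [hω, ω_pos.ne', sub_eq_zero, eq_comm (a := s)]

lemma exists_mem_Iint_neg_of_le_β {s : ℝ} (hs : 0 < s) (hsβ : s ≤ β) :
    ∃ n : ℕ, n ≠ 0 ∧ s ∈ Iint (-n) := by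
  obtain ⟨n, hlt, hle⟩ :=
    exists_nat_pow_near_of_lt_one hs (hsβ.trans β_lt_one.le) β_pos β_lt_one
  have hn : n ≠ 0 := by
    rintro rfl
    rw [zero_add, pow_one] at hlt
    linarith
  exact ⟨n, hn, (mem_Iint_neg_natCast_iff hn).mpr ⟨hlt, hle⟩⟩

lemma exists_mem_Iint {s : ℝ} (hs₀ : 0 < s) (hs₂ : s < √2) : ∃ i : ℤ, s ∈ Iint i := by
  rcases le_or_gt s β with hsβ | hβs
  · obtain ⟨n, -, hs⟩ := exists_mem_Iint_neg_of_le_β hs₀ hsβ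
    exact ⟨_, hs⟩
  rcases lt_or_ge s 1 with hs1 | h1s
  · exact ⟨0, by simpa [Iint] using ⟨hβs, hs1⟩⟩
  · obtain ⟨n, hn, hs⟩ := exists_mem_Iint_neg_of_le_β (s := √2 - s) (by linarith)
      (by unfold β; linarith)
    exact ⟨n, (mem_Iint_natCast_iff hn).mpr hs⟩

lemma exists_Δ_eq_iff {s : ℝ} :
    (∃ i : ℤ, i ≠ 0 ∧ s = Δ i) ↔
      (∃ k : ℕ, 1 ≤ k ∧ s = β ^ k) ∨ (∃ k : ℕ, 1 ≤ k ∧ s = √2 - β ^ k) := by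
  constructor
  · rintro ⟨i, hi, rfl⟩
    have hn : i.natAbs ≠ 0 := Int.natAbs_ne_zero.mpr hi
    rcases Int.natAbs_eq i with h | h <;> rw [h]
    · exact .inr ⟨_, Nat.one_le_iff_ne_zero.mpr hn, Δ_natCast hn⟩
    · exact .inl ⟨_, Nat.one_le_iff_ne_zero.mpr hn, Δ_neg_natCast hn⟩
  · rintro (⟨k, hk, rfl⟩ | ⟨k, hk, rfl⟩)
    · exact ⟨-k, by omega, (Δ_neg_natCast (by omega)).symm⟩
    · exact ⟨k, by omega, (Δ_natCast (by omega)).symm⟩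

namespace IsLuroth

variable {f : ℝ → ℝ} (hf : IsLuroth f)
include hf

lemma apply_eq_zero_iff_of_mem_Iint {i : ℤ} {s : ℝ} (hs : s ∈ Iint i) :
    f s = 0 ↔ s = Δ i := by
  rw [hf.2.2 i s hs, fval_eq_zero_iff]

lemma apply_Δ {i : ℤ} (hi : i ≠ 0) : f (Δ i) = 0 :=
  (hf.apply_eq_zero_iff_of_mem_Iint (Δ_mem_Iint hi)).mpr rfl

end IsLuroth

/-- the zero set of `f` in `[0,√2]` is
`{0, √2} ∪ {β^k : k ≥ 1} ∪ {√2 - β^k : k ≥ 1}`. -/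
theorem luroth_zero_set (f : ℝ → ℝ) (hf : IsLuroth f) :
    ∀ s ∈ Set.Icc (0 : ℝ) (Real.sqrt 2),
      (f s = 0 ↔
        s = 0 ∨ s = Real.sqrt 2 ∨
        (∃ k : ℕ, 1 ≤ k ∧ s = β ^ k) ∨
        (∃ k : ℕ, 1 ≤ k ∧ s = Real.sqrt 2 - β ^ k)) := by
  rintro s ⟨hs₀, hs₂⟩
  rw [← exists_Δ_eq_iff]
  rcases hs₀.eq_or_lt with rfl | hs₀
  · simp [hf.1]
  rcases hs₂.eq_or_lt with rfl | hs₂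
  · simp [hf.2.1]
  simp only [hs₀.ne', hs₂.ne, false_or]
  constructor
  · intro hfs
    obtain ⟨i, hi⟩ := exists_mem_Iint hs₀ hs₂
    have hsΔ : s = Δ i := (hf.apply_eq_zero_iff_of_mem_Iint hi).mp hfs
    refine ⟨i, ?_, hsΔ⟩
    rintro rfl
    simp [Iint, hsΔ, Δ_zero] at hi
  · rintro ⟨i, hi, rfl⟩
    exact hf.apply_Δ hi
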